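/- Let d = 2 and define L₀ : ℝ² → ℝ̄ by L₀(x) = sup_{y ∈ ℝ²} ( ⟨x,y⟩ − max_{l ∈ {0,1,2}} ( ‖y‖_(l) − l ) ). Then for every x = (x₁,x₂) ∈ ℝ² with x₁² + x₂² < 1, |x₁| + (√2 − 1)|x₂| ≥ 1 and |x₁| > |x₂|, one has L₀(x₁,x₂) = (3 − |x₁|)/2 + x₂² / (2(1 − |x₁|)). -/

import Mathlib

noncomputable section

variable {d : ℕ}

/-- The projection `x_K` of `x` onto the coordinates in `K`
(the components outside `K` vanish). -/
def restr (K : Finset (Fin d)) (x : EuclideanSpace ℝ (Fin d)) : EuclideanSpace ℝ (Fin d) :=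
  WithLp.toLp 2 (fun i => if i ∈ K then x i else 0)

/-- The 2-k-symmetric gauge norm `‖y‖_(k) = sup {‖y_K‖ : |K| ≤ k}`
(equal to `0` for `k = 0`, by the convention `‖·‖_(0) = 0`). -/
def gaugeNorm (k : ℕ) (y : EuclideanSpace ℝ (Fin d)) : ℝ :=
  ⨆ K : {K : Finset (Fin d) // K.card ≤ k}, ‖restr (K : Finset (Fin d)) y‖

/-- The ℓ₀ pseudonorm: the number of nonzero components. -/
def l0 (x : EuclideanSpace ℝ (Fin d)) : ℕ :=
  (Finset.univ.filter fun i => x i ≠ 0).card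

open Classical in
/-- The Capra coupling `¢(x,y) = ⟨x,y⟩ / ‖x‖` for `x ≠ 0`, and `¢(0,y) = 0`. -/
def capra (x y : EuclideanSpace ℝ (Fin d)) : ℝ :=
  if x = 0 then 0 else (inner ℝ x y : ℝ) / ‖x‖

/-- The Capra conjugate of ℓ₀: `y ↦ max_{0 ≤ l ≤ d} (‖y‖_(l) − l)`. -/
def capraConjL0 (y : EuclideanSpace ℝ (Fin d)) : ℝ :=
  ⨆ l : Fin (d + 1), (gaugeNorm (l : ℕ) y - ((l : ℕ) : ℝ))

/-- `L₀(x) = sup_y (⟨x,y⟩ − max_{0 ≤ l ≤ d}(‖y‖_(l) − l))`, with values in `ℝ̄ = EReal`. -/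
def L0 (x : EuclideanSpace ℝ (Fin d)) : EReal :=
  ⨆ y : EuclideanSpace ℝ (Fin d), (((inner ℝ x y : ℝ) - capraConjL0 y : ℝ) : EReal)

/-- The k-support norm: the dual norm of the 2-k-symmetric gauge norm,
`‖y‖^sp_(k) = sup {⟨x,y⟩ : ‖x‖_(k) ≤ 1}`. -/
def suppNorm (k : ℕ) (y : EuclideanSpace ℝ (Fin d)) : ℝ :=
  sSup {c : ℝ | ∃ x : EuclideanSpace ℝ (Fin d), gaugeNorm k x ≤ 1 ∧ c = (inner ℝ x y : ℝ)}

/-- The unit ball of the k-support norm, with the convention `B^sp_(0) = {0}`. -/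
def Bsp (d k : ℕ) : Set (EuclideanSpace ℝ (Fin d)) :=
  if k = 0 then {0} else {y | suppNorm k y ≤ 1}

/-- The degenerate unit sphere `S_K = {x : x_{−K} = 0 and ‖x_K‖ = 1}`. -/
def sphK (K : Finset (Fin d)) : Set (EuclideanSpace ℝ (Fin d)) :=
  {x | (∀ i, i ∉ K → x i = 0) ∧ ‖restr K x‖ = 1}

/-- The degenerate unit ball `B_K = {x : x_{−K} = 0 and ‖x_K‖ ≤ 1}`. -/
def ballK (K : Finset (Fin d)) : Set (EuclideanSpace ℝ (Fin d)) :=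
  {x | (∀ i, i ∉ K → x i = 0) ∧ ‖restr K x‖ ≤ 1}

/-!
`L₀(x)` is computed from a dual certificate. Put `a = |x 0|`, `s = |x 1| / (1 - a)`,
`t = (s² - 1) / 2` and `θ = 1 - (1 - a)(t + 1)`: the hypothesis with `√2` says `s ≥ 1 + √2`,
i.e. `s ≤ t`, and `x 0 ² + x 1 ² < 1` says `θ ≥ 0`. Then `x = θ σ e₀ + (1 - a) y₀` with
`σ = sign (x 0)` and `y₀ = (σ t, x 1 / (1 - a))`, a vector of norm `t + 1` with entries
of absolute value at most `t`.
For every `y`, `⟪x, y⟫ ≤ θ ‖y‖_(1) + (1 - θ) ‖y‖_(2) ≤ 2 - θ + max_l (‖y‖_(l) - l)`,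
and at `y = y₀` the maximum is `t - 1` and equality holds, so `L₀(x) = 2 - θ`.
-/

section GaugeNorm

lemma norm_restr_mono {K L : Finset (Fin d)} (hKL : K ⊆ L) (y : EuclideanSpace ℝ (Fin d)) :
    ‖restr K y‖ ≤ ‖restr L y‖ := by
  simp only [EuclideanSpace.norm_eq, restr]
  gcongr with i
  by_cases hi : i ∈ K
  · simp [hi, hKL hi]
  · simp [hi]

lemma restr_univ (y : EuclideanSpace ℝ (Fin d)) : restr Finset.univ y = y := by
  ext i; simp [restr]

lemma restr_empty (y : EuclideanSpace ℝ (Fin d)) : restr ∅ y = 0 := by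
  ext i; simp [restr]

lemma norm_restr_singleton (i : Fin d) (y : EuclideanSpace ℝ (Fin d)) :
    ‖restr {i} y‖ = |y i| := by
  have : restr {i} y = EuclideanSpace.single i (y i) := by
    ext j; by_cases h : j = i <;> simp [restr, h]
  simp [this]

lemma norm_restr_le (K : Finset (Fin d)) (y : EuclideanSpace ℝ (Fin d)) : ‖restr K y‖ ≤ ‖y‖ := by
  simpa [restr_univ] using norm_restr_mono (Finset.subset_univ K) y

lemma norm_restr_le_gaugeNorm {k : ℕ} {K : Finset (Fin d)} (hK : K.card ≤ k)
    (y : EuclideanSpace ℝ (Fin d)) : ‖restr K y‖ ≤ gaugeNorm k y :=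
  le_ciSup (f := fun K : {K : Finset (Fin d) // K.card ≤ k} => ‖restr (K : Finset (Fin d)) y‖)
    (Set.finite_range _).bddAbove ⟨K, hK⟩

lemma gaugeNorm_le {k : ℕ} {y : EuclideanSpace ℝ (Fin d)} {c : ℝ} (hc : 0 ≤ c)
    (h : ∀ K : Finset (Fin d), K.card ≤ k → ‖restr K y‖ ≤ c) : gaugeNorm k y ≤ c :=
  Real.iSup_le (fun K => h K K.2) hc

lemma gaugeNorm_zero (y : EuclideanSpace ℝ (Fin d)) : gaugeNorm 0 y = 0 := by
  refine le_antisymm (gaugeNorm_le le_rfl fun K hK => ?_) ?_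
  · simp [Finset.card_eq_zero.mp (Nat.le_zero.mp hK), restr_empty]
  · simpa [restr_empty] using norm_restr_le_gaugeNorm (K := ∅) le_rfl y

lemma gaugeNorm_le_norm (k : ℕ) (y : EuclideanSpace ℝ (Fin d)) : gaugeNorm k y ≤ ‖y‖ :=
  gaugeNorm_le (norm_nonneg y) fun K _ => norm_restr_le K y

lemma norm_le_gaugeNorm {k : ℕ} (hk : d ≤ k) (y : EuclideanSpace ℝ (Fin d)) :
    ‖y‖ ≤ gaugeNorm k y := by
  simpa [restr_univ] using norm_restr_le_gaugeNorm (K := Finset.univ) (by simpa using hk) y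

lemma abs_le_gaugeNorm_one (y : EuclideanSpace ℝ (Fin d)) (i : Fin d) : |y i| ≤ gaugeNorm 1 y := by
  simpa [norm_restr_singleton] using norm_restr_le_gaugeNorm (K := {i}) le_rfl y

lemma gaugeNorm_one_le {y : EuclideanSpace ℝ (Fin d)} {c : ℝ} (hc : 0 ≤ c)
    (h : ∀ i, |y i| ≤ c) : gaugeNorm 1 y ≤ c := by
  refine gaugeNorm_le hc fun K hK => ?_
  rcases K.eq_empty_or_nonempty with rfl | ⟨i, hi⟩
  · simpa [restr_empty] using hc
  · have hKi : K ⊆ {i} := fun j hj => Finset.mem_singleton.2 (Finset.card_le_one.1 hK j hj i hi)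
    calc ‖restr K y‖ ≤ ‖restr {i} y‖ := norm_restr_mono hKi y
      _ = |y i| := norm_restr_singleton i y
      _ ≤ c := h i

end GaugeNorm

section CapraConjugate

lemma gaugeNorm_sub_le_capraConjL0 (y : EuclideanSpace ℝ (Fin d)) (l : Fin (d + 1)) :
    gaugeNorm (l : ℕ) y - ((l : ℕ) : ℝ) ≤ capraConjL0 y :=
  le_ciSup (f := fun l : Fin (d + 1) => gaugeNorm (l : ℕ) y - ((l : ℕ) : ℝ))
    (Set.finite_range _).bddAbove l

lemma abs_sub_one_le_capraConjL0 (y : EuclideanSpace ℝ (Fin d)) (i : Fin d) :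
    |y i| - 1 ≤ capraConjL0 y := by
  have h₁ : gaugeNorm 1 y - 1 ≤ capraConjL0 y := by
    simpa using gaugeNorm_sub_le_capraConjL0 y ⟨1, Nat.succ_lt_succ (Nat.zero_lt_of_lt i.2)⟩
  linarith [abs_le_gaugeNorm_one y i]

lemma norm_sub_two_le_capraConjL0 (y : EuclideanSpace ℝ (Fin 2)) : ‖y‖ - 2 ≤ capraConjL0 y := by
  have h₂ : gaugeNorm 2 y - 2 ≤ capraConjL0 y := by
    simpa using gaugeNorm_sub_le_capraConjL0 y 2
  linarith [norm_le_gaugeNorm le_rfl y]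

lemma capraConjL0_le_of_abs_le {y : EuclideanSpace ℝ (Fin d)} {t : ℝ} (ht : 1 ≤ t)
    (hy : ∀ i, |y i| ≤ t) (hnorm : ‖y‖ ≤ t + 1) : capraConjL0 y ≤ t - 1 := by
  refine ciSup_le fun ⟨l, hl⟩ => ?_
  rcases l with _ | _ | l
  · simpa [gaugeNorm_zero] using ht
  · have := gaugeNorm_one_le (by linarith) hy
    push_cast; linarith
  · have := gaugeNorm_le_norm (l + 2) y
    push_cast; linarith [(Nat.cast_nonneg l : (0 : ℝ) ≤ l)]

end CapraConjugate

lemma L0_eq_of_forall_le {x y₀ : EuclideanSpace ℝ (Fin d)} {V : ℝ}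
    (hle : ∀ y, inner ℝ x y - capraConjL0 y ≤ V) (hy₀ : V ≤ inner ℝ x y₀ - capraConjL0 y₀) :
    L0 x = V :=
  le_antisymm (iSup_le fun y => EReal.coe_le_coe_iff.2 (hle y))
    ((EReal.coe_le_coe_iff.2 hy₀).trans
      (le_iSup (fun y => ((inner ℝ x y - capraConjL0 y : ℝ) : EReal)) y₀))

lemma inner_sub_capraConjL0_le {x q y : EuclideanSpace ℝ (Fin 2)} {i : Fin 2} {σ θ : ℝ}
    (hσ : |σ| ≤ 1) (hθ : 0 ≤ θ) (hq : ‖q‖ ≤ 1 - θ)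
    (hx : x = θ • EuclideanSpace.single i σ + q) :
    inner ℝ x y - capraConjL0 y ≤ 2 - θ := by
  have h₁ := abs_sub_one_le_capraConjL0 y i
  have h₂ := norm_sub_two_le_capraConjL0 y
  have hinner : inner ℝ x y ≤ θ * |y i| + (1 - θ) * ‖y‖ := by
    rw [hx, inner_add_left, inner_smul_left, EuclideanSpace.inner_single_left]
    simp only [conj_trivial]
    gcongr
    · calc σ * y i ≤ |σ * y i| := le_abs_self _
        _ ≤ |y i| := by rw [abs_mul]; exact mul_le_of_le_one_left (abs_nonneg _) hσ
    · exact (real_inner_le_norm q y).trans (by gcongr)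
  have h₁' := mul_le_mul_of_nonneg_left h₁ hθ
  have h₂' := mul_le_mul_of_nonneg_left h₂ ((norm_nonneg q).trans hq)
  linarith

lemma L0_eq_two_sub_of_eq_smul_single_add_smul {x y₀ : EuclideanSpace ℝ (Fin 2)} {i : Fin 2}
    {σ θ μ t : ℝ} (hσ : |σ| ≤ 1) (hσy : σ * y₀ i = t) (hθ : 0 ≤ θ) (hμ : 0 ≤ μ)
    (hμt : μ * (t + 1) = 1 - θ) (ht : 1 ≤ t) (hy₀ : ∀ j, |y₀ j| ≤ t) (hn : ‖y₀‖ = t + 1)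
    (hx : x = θ • EuclideanSpace.single i σ + μ • y₀) :
    L0 x = ((2 - θ : ℝ) : EReal) := by
  refine L0_eq_of_forall_le (y₀ := y₀) (fun y => inner_sub_capraConjL0_le hσ hθ ?_ hx) ?_
  · rw [norm_smul, Real.norm_of_nonneg hμ, hn, hμt]
  · have hval : inner ℝ x y₀ = θ * t + (1 - θ) * (t + 1) := by
      rw [hx, inner_add_left, inner_smul_left, inner_smul_left, EuclideanSpace.inner_single_left,
        real_inner_self_eq_norm_sq, hn, ← hμt]
      simp only [conj_trivial, hσy]
      ring
    linarith [capraConjL0_le_of_abs_le ht hy₀ hn.le]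

lemma one_add_sqrt_two_le_div {a b : ℝ} (ha : a < 1) (h : 1 ≤ a + (√2 - 1) * b) :
    1 + √2 ≤ b / (1 - a) := by
  rw [le_div_iff₀ (by linarith)]
  have hw : (√2 + 1) * (√2 - 1) = 1 := by ring_nf; norm_num
  have H := mul_le_mul_of_nonneg_left h (by positivity : 0 ≤ √2 + 1)
  rw [mul_add, ← mul_assoc, hw] at H
  linarith

lemma le_half_sq_sub_one {s : ℝ} (hs : 1 + √2 ≤ s) : s ≤ (s ^ 2 - 1) / 2 := by
  nlinarith [Real.sq_sqrt zero_le_two, Real.sqrt_nonneg 2,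
    mul_nonneg (sub_nonneg.2 hs) (by linarith [Real.sqrt_nonneg 2] : 0 ≤ s - 1 + √2)]

lemma L0_eq_one_add_mul_of_sq_div_eq {x : EuclideanSpace ℝ (Fin 2)} {t : ℝ} (hx0 : x 0 ≠ 0)
    (ha : |x 0| < 1) (ht : 1 ≤ t) (hx1 : |x 1| / (1 - |x 0|) ≤ t)
    (hsq : (x 1 / (1 - |x 0|)) ^ 2 = 2 * t + 1) (hθ : (1 - |x 0|) * (t + 1) ≤ 1) :
    L0 x = ((1 + (1 - |x 0|) * (t + 1) : ℝ) : EReal) := by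
  set σ := x 0 / |x 0|
  have hσ : |σ| = 1 := by simp [σ, abs_div, hx0]
  have hσ2 : σ ^ 2 = 1 := by rw [← sq_abs, hσ, one_pow]
  rw [L0_eq_two_sub_of_eq_smul_single_add_smul (i := 0) (σ := σ) (μ := 1 - |x 0|)
    (y₀ := !₂[σ * t, x 1 / (1 - |x 0|)]) hσ.le ?_ (sub_nonneg.2 hθ) (by linarith)
    (by ring) ht ?_ ?_ ?_]
  · congr 1
    ring
  · simp only [Matrix.cons_val_zero]
    linear_combination t * hσ2
  · intro j
    fin_cases j
    · simp [abs_mul, hσ, abs_of_nonneg (by linarith : 0 ≤ t)]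
    · simpa [abs_div, abs_of_pos (sub_pos.2 ha)] using hx1
  · rw [EuclideanSpace.norm_eq, Real.sqrt_eq_iff_mul_self_eq_of_pos (by linarith)]
    simp only [Fin.sum_univ_two, Real.norm_eq_abs, sq_abs, Matrix.cons_val_zero,
      Matrix.cons_val_one, mul_pow, hσ2, hsq]
    ring
  · have h1a : 1 - |x 0| ≠ 0 := by linarith
    have hσa : σ * |x 0| = x 0 := div_mul_cancel₀ _ (abs_ne_zero.2 hx0)
    ext j
    fin_cases j
    · simp only [Fin.zero_eta, PiLp.add_apply, PiLp.smul_apply, PiLp.single_eq_same, smul_eq_mul,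
        Matrix.cons_val_zero]
      linear_combination -hσa
    · simp [mul_div_cancel₀ _ h1a]

theorem L0_formula_dim2_nail_general (x : EuclideanSpace ℝ (Fin 2))
    (h1 : (x 0) ^ 2 + (x 1) ^ 2 < 1)
    (h2 : 1 ≤ |x 0| + (Real.sqrt 2 - 1) * |x 1|) :
    L0 x = (((3 - |x 0|) / 2 + (x 1) ^ 2 / (2 * (1 - |x 0|)) : ℝ) : EReal) := by
  set a := |x 0|
  have hab : a ^ 2 + |x 1| ^ 2 < 1 := by simpa only [a, sq_abs] using h1
  have ha : 0 < 1 - a := by nlinarith [sq_nonneg |x 1|, abs_nonneg (x 0)]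
  set s := |x 1| / (1 - a)
  set t := (s ^ 2 - 1) / 2
  have hs : 1 + √2 ≤ s := one_add_sqrt_two_le_div (by linarith) h2
  have hst : s ≤ t := le_half_sq_sub_one hs
  have ht : 1 ≤ t := by linarith [Real.sqrt_nonneg 2]
  have hθ : (1 - a) * (t + 1) ≤ 1 := by
    simp only [t, s, div_pow]
    rw [← sub_nonneg]
    field_simp
    nlinarith
  have hx0 : x 0 ≠ 0 := abs_pos.1 (by nlinarith)
  have hsq : (x 1 / (1 - a)) ^ 2 = 2 * t + 1 := by simp only [t, s, div_pow, sq_abs]; ring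
  rw [L0_eq_one_add_mul_of_sq_div_eq hx0 (by linarith) ht hst hsq hθ, ← sq_abs (x 1)]
  congr 1
  simp only [t, s]
  field_simp
  ring

/-- in dimension `d = 2`, for `x` with `x₁² + x₂² < 1`,
`|x₁| + (√2 − 1)|x₂| ≥ 1` and `|x₁| > |x₂|`, one has
`L₀(x₁,x₂) = (3 − |x₁|)/2 + x₂²/(2(1 − |x₁|))`. -/
theorem L0_formula_dim2_nail (x : EuclideanSpace ℝ (Fin 2))
    (h1 : (x 0) ^ 2 + (x 1) ^ 2 < 1)
    (h2 : 1 ≤ |x 0| + (Real.sqrt 2 - 1) * |x 1|)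
    (h3 : |x 1| < |x 0|) :
    L0 x = (((3 - |x 0|) / 2 + (x 1) ^ 2 / (2 * (1 - |x 0|)) : ℝ) : EReal) :=
  L0_formula_dim2_nail_general x h1 h2
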